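/- Let F be a self-similar set with feasible open set O satisfying OSC, let G := O ∖ ⋃ᵢ closure(Sᵢ O) and Γ := O ∖ ⋃ᵢ Sᵢ(O). Then G is open, G ⊆ Γ ⊆ G ∪ ⋃ᵢ ∂(Sᵢ O), and G = int(Γ). Moreover the family T(O) := {S_w(G) : w a finite word} is a tiling of O: distinct tiles are disjoint and closure(O) = closure(⋃_{R ∈ T(O)} R). -/

import Mathlib

open MeasureTheory Metric

/-- Composition S_w = S_{w₁} ∘ ⋯ ∘ S_{w_m} of IFS maps along a finite word w. -/
def wordMap {n N : ℕ}
    (S : Fin N → EuclideanSpace ℝ (Fin n) → EuclideanSpace ℝ (Fin n))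
    (w : List (Fin N)) : EuclideanSpace ℝ (Fin n) → EuclideanSpace ℝ (Fin n) :=
  (w.map S).foldr (· ∘ ·) id

/-!
Write `G = O \ ⋃ᵢ cl(Sᵢ O)`. The statements about `G` and `Γ` are point-set topology of a
finite union. Tiles are disjoint because two distinct words either differ at some first letter,
after which they land in the disjoint sets `Sᵢ O` and `Sⱼ O`, or one is a proper prefix of the
other and `G` misses every `Sᵢ O`. For the covering, `cl O ⊆ cl G ∪ ⋃ᵢ Sᵢ(cl O)`; iterating, a
point of `O` outside the closure of the tiles lies in `S_w(cl O)` for words `w` of every length.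
These sets shrink geometrically towards `F`, so such points form an open subset of `F`, which is
empty as `dim_H F < n`.
-/

open Set Filter Function Topology NNReal

section FiniteUnion

variable {X ι : Type*} [TopologicalSpace X] {O : Set X} {A : ι → Set X}

theorem isOpen_diff_iUnion_closure [Finite ι] (hO : IsOpen O) :
    IsOpen (O \ ⋃ i, closure (A i)) :=
  hO.sdiff (isClosed_iUnion_of_finite fun _ => isClosed_closure)

theorem diff_iUnion_subset_diff_iUnion_closure_union_frontier :
    O \ ⋃ i, A i ⊆ (O \ ⋃ i, closure (A i)) ∪ ⋃ i, frontier (A i) := by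
  rintro x ⟨hxO, hxA⟩
  by_cases hx : x ∈ ⋃ i, closure (A i)
  · obtain ⟨i, hi⟩ := mem_iUnion.mp hx
    exact Or.inr (mem_iUnion.mpr ⟨i, hi, fun h => hxA (mem_iUnion.mpr ⟨i, interior_subset h⟩)⟩)
  · exact Or.inl ⟨hxO, hx⟩

theorem interior_diff_iUnion [Finite ι] (hO : IsOpen O) :
    interior (O \ ⋃ i, A i) = O \ ⋃ i, closure (A i) := by
  refine Subset.antisymm (fun x hx => ⟨(interior_subset hx).1, ?_⟩)
    (interior_maximal (sdiff_subset_sdiff_right (iUnion_mono fun _ => subset_closure))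
      (isOpen_diff_iUnion_closure hO))
  rintro ⟨_, ⟨i, rfl⟩, hi⟩
  have : interior (O \ ⋃ i, A i) ⊆ interior (A i)ᶜ :=
    interior_mono fun y hy hyA => hy.2 (mem_iUnion.mpr ⟨i, hyA⟩)
  exact (interior_compl (s := A i) ▸ this hx) hi

theorem closure_subset_closure_diff_iUnion_union_image [Finite ι] [T2Space X]
    {f : ι → X → X} (hf : ∀ i, Continuous (f i)) (hO : IsCompact (closure O)) :
    closure O ⊆ closure (O \ ⋃ i, closure (f i '' O)) ∪ ⋃ i, f i '' closure O := by
  have hU : IsClosed (⋃ i, f i '' closure O) :=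
    isClosed_iUnion_of_finite fun i => (hO.image (hf i)).isClosed
  calc closure O ⊆ closure ((O \ ⋃ i, closure (f i '' O)) ∪ ⋃ i, f i '' closure O) := by
        refine closure_mono fun x hx => ?_
        simp_rw [image_closure_of_isCompact hO (hf _).continuousOn]
        by_cases h : x ∈ ⋃ i, closure (f i '' O)
        exacts [Or.inr h, Or.inl ⟨hx, h⟩]
    _ = closure (O \ ⋃ i, closure (f i '' O)) ∪ ⋃ i, f i '' closure O := by
        rw [closure_union, hU.closure_eq]

end FiniteUnion

theorem exists_lipschitzWith_lt_one {ι X Y : Type*} [Fintype ι] [PseudoEMetricSpace X]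
    [PseudoEMetricSpace Y] {f : ι → X → Y} (h : ∀ i, ∃ K < 1, LipschitzWith K (f i)) :
    ∃ K < 1, ∀ i, LipschitzWith K (f i) := by
  choose K hK1 hK using h
  exact ⟨Finset.univ.sup K, (Finset.sup_lt_iff zero_lt_one).2 fun i _ => hK1 i,
    fun i => (hK i).weaken (Finset.le_sup (Finset.mem_univ i))⟩

theorem Function.Injective.of_dist_eq_mul {X Y : Type*} [MetricSpace X] [MetricSpace Y]
    {f : X → Y} {r : ℝ} (hr : r ≠ 0) (hf : ∀ x y, dist (f x) (f y) = r * dist x y) :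
    Injective f := fun x y h => by
  simpa [hr, h] using hf x y

namespace wordMap

variable {n N : ℕ} {S : Fin N → EuclideanSpace ℝ (Fin n) → EuclideanSpace ℝ (Fin n)}

@[simp] theorem nil : wordMap S [] = id := rfl

@[simp] theorem cons (i : Fin N) (w : List (Fin N)) : wordMap S (i :: w) = S i ∘ wordMap S w :=
  rfl

theorem concat (w : List (Fin N)) (i : Fin N) : wordMap S (w ++ [i]) = wordMap S w ∘ S i := by
  induction w with
  | nil => rfl
  | cons j w ih => simp only [List.cons_append, cons, ih, Function.comp_assoc]

theorem image_subset {A : Set (EuclideanSpace ℝ (Fin n))} (hA : ∀ i, S i '' A ⊆ A)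
    (w : List (Fin N)) : wordMap S w '' A ⊆ A := by
  induction w with
  | nil => simp
  | cons i w ih => simpa [image_comp] using (image_mono ih).trans (hA i)

theorem continuous (hS : ∀ i, Continuous (S i)) (w : List (Fin N)) :
    Continuous (wordMap S w) := by
  induction w with
  | nil => exact continuous_id
  | cons i w ih => exact (hS i).comp ih

theorem lipschitzWith {K : ℝ≥0} (hS : ∀ i, LipschitzWith K (S i)) (w : List (Fin N)) :
    LipschitzWith (K ^ w.length) (wordMap S w) := by
  induction w with
  | nil => simpa using LipschitzWith.id
  | cons i w ih => simpa [pow_succ'] using (hS i).comp ih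

variable {O G : Set (EuclideanSpace ℝ (Fin n))}

theorem pairwise_disjoint_image (hSinj : ∀ i, Injective (S i))
    (hSO : ∀ i, S i '' O ⊆ O) (hOSC : Pairwise (Disjoint on fun i => S i '' O))
    (hGO : G ⊆ O) (hG : ∀ i, Disjoint G (S i '' O)) :
    Pairwise (Disjoint on fun w : List (Fin N) => wordMap S w '' G) := by
  have hcons (i : Fin N) (w : List (Fin N)) : wordMap S (i :: w) '' G ⊆ S i '' O := by
    simpa [image_comp] using image_mono ((image_mono hGO).trans (image_subset hSO w))
  intro w w' hne
  induction w generalizing w' with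
  | nil =>
    obtain _ | ⟨j, v⟩ := w'
    · exact absurd rfl hne
    · simpa [onFun] using (hG j).mono_right (hcons j v)
  | cons i u ih =>
    obtain _ | ⟨j, v⟩ := w'
    · simpa [onFun] using ((hG i).mono_right (hcons i u)).symm
    · by_cases hij : i = j
      · subst hij
        simpa [onFun, image_comp] using
          disjoint_image_of_injective (hSinj i) (@ih v fun h => hne (h ▸ rfl))
      · exact (hOSC hij).mono (hcons i u) (hcons j v)

theorem exists_length_eq_mem_image {K : Set (EuclideanSpace ℝ (Fin n))}
    (hS : ∀ i, Continuous (S i)) (hK : K ⊆ closure G ∪ ⋃ i, S i '' K)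
    {x : EuclideanSpace ℝ (Fin n)}
    (hxK : x ∈ K) (hxG : x ∉ closure (⋃ w, wordMap S w '' G)) (m : ℕ) :
    ∃ w : List (Fin N), w.length = m ∧ x ∈ wordMap S w '' K := by
  induction m with
  | zero => exact ⟨[], rfl, x, hxK, rfl⟩
  | succ m ih =>
    obtain ⟨w, rfl, y, hyK, rfl⟩ := ih
    rcases hK hyK with hyG | hyS
    · refine absurd ?_ hxG
      exact closure_mono (subset_iUnion (fun w => wordMap S w '' G) w)
        (image_closure_subset_closure_image (continuous hS w) ⟨y, hyG, rfl⟩)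
    · obtain ⟨i, z, hzK, rfl⟩ := mem_iUnion.mp hyS
      exact ⟨w ++ [i], by simp, z, hzK, by rw [concat]; rfl⟩

theorem mem_of_forall_exists_length_eq_mem_image {K : ℝ≥0} (hK : K < 1)
    (hS : ∀ i, LipschitzWith K (S i)) {F B : Set (EuclideanSpace ℝ (Fin n))} (hF : IsClosed F)
    (hFne : F.Nonempty) (hSF : ∀ i, S i '' F ⊆ F) (hB : Bornology.IsBounded B)
    {z : EuclideanSpace ℝ (Fin n)}
    (hz : ∀ m : ℕ, ∃ w : List (Fin N), w.length = m ∧ z ∈ wordMap S w '' B) : z ∈ F := by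
  obtain ⟨y, hy⟩ := hFne
  obtain ⟨C, hC⟩ := hB.subset_closedBall y
  have hdist (m : ℕ) : infDist z F ≤ K ^ m * C := by
    obtain ⟨w, rfl, a, ha, rfl⟩ := hz m
    calc infDist (wordMap S w a) F ≤ dist (wordMap S w a) (wordMap S w y) :=
          infDist_le_dist_of_mem (image_subset hSF w ⟨y, hy, rfl⟩)
      _ ≤ K ^ w.length * dist a y := by
          exact_mod_cast (lipschitzWith hS w).dist_le_mul a y
      _ ≤ K ^ w.length * C := by gcongr; exact hC ha
  have hlim : Tendsto (fun m : ℕ => (K : ℝ) ^ m * C) atTop (𝓝 0) := by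
    simpa using (tendsto_pow_atTop_nhds_zero_of_lt_one K.coe_nonneg hK).mul_const C
  rw [hF.mem_iff_infDist_zero ⟨y, hy⟩]
  exact le_antisymm (ge_of_tendsto' hlim hdist) infDist_nonneg

end wordMap

theorem self_similar_tiling_general {n N : ℕ}
    (S : Fin N → EuclideanSpace ℝ (Fin n) → EuclideanSpace ℝ (Fin n))
    (r : Fin N → ℝ) (hr : ∀ i, r i ∈ Set.Ioo (0 : ℝ) 1)
    (hsim : ∀ i x y, dist (S i x) (S i y) = r i * dist x y)
    (F : Set (EuclideanSpace ℝ (Fin n))) (hFcomp : IsCompact F) (hFne : F.Nonempty)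
    (hFinv : F = ⋃ i, S i '' F) (hdimH : dimH F < n)
    (O : Set (EuclideanSpace ℝ (Fin n))) (hOopen : IsOpen O)
    (hObdd : Bornology.IsBounded O)
    (hOSC₁ : (⋃ i, S i '' O) ⊆ O)
    (hOSC₂ : ∀ i j, i ≠ j → Disjoint (S i '' O) (S j '' O)) :
    IsOpen (O \ ⋃ i, closure (S i '' O)) ∧
    (O \ ⋃ i, closure (S i '' O)) ⊆ (O \ ⋃ i, S i '' O) ∧
    (O \ ⋃ i, S i '' O) ⊆ (O \ ⋃ i, closure (S i '' O)) ∪ ⋃ i, frontier (S i '' O) ∧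
    (O \ ⋃ i, closure (S i '' O)) = interior (O \ ⋃ i, S i '' O) ∧
    (∀ w w' : List (Fin N),
      wordMap S w '' (O \ ⋃ i, closure (S i '' O)) ≠
        wordMap S w' '' (O \ ⋃ i, closure (S i '' O)) →
      Disjoint (wordMap S w '' (O \ ⋃ i, closure (S i '' O)))
        (wordMap S w' '' (O \ ⋃ i, closure (S i '' O)))) ∧
    closure O = closure (⋃ w : List (Fin N),
      wordMap S w '' (O \ ⋃ i, closure (S i '' O))) := by
  set G := O \ ⋃ i, closure (S i '' O)
  set T := ⋃ w : List (Fin N), wordMap S w '' G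
  obtain ⟨K, hK1, hK⟩ := exists_lipschitzWith_lt_one fun i =>
    ⟨(r i).toNNReal, Real.toNNReal_lt_one.2 (hr i).2,
      LipschitzWith.of_dist_le' fun x y => (hsim i x y).le⟩
  have hScont i := (hK i).continuous
  have hSO i : S i '' O ⊆ O := (subset_iUnion _ i).trans hOSC₁
  have hSF i : S i '' F ⊆ F := (subset_iUnion (fun j => S j '' F) i).trans hFinv.symm.subset
  have hGS i : Disjoint G (S i '' O) :=
    disjoint_left.2 fun x hx hxS => hx.2 (mem_iUnion.2 ⟨i, subset_closure hxS⟩)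
  have hdisj := wordMap.pairwise_disjoint_image
    (fun i => Injective.of_dist_eq_mul (hr i).1.ne' (hsim i)) hSO (fun i j => hOSC₂ i j)
    sdiff_subset hGS
  have hOF : O \ closure T ⊆ F := fun z ⟨hzO, hzT⟩ =>
    wordMap.mem_of_forall_exists_length_eq_mem_image hK1 hK hFcomp.isClosed hFne hSF
      hObdd.closure
      (wordMap.exists_length_eq_mem_image hScont
        (closure_subset_closure_diff_iUnion_union_image hScont hObdd.isCompact_closure)
        (subset_closure hzO) hzT)
  have hFint : interior F = ∅ := interior_eq_empty_iff_dense_compl.2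
    (dense_compl_of_dimH_lt_finrank (by rwa [finrank_euclideanSpace_fin]))
  have hOT : O ⊆ closure T := fun z hz => by_contra fun hzT =>
    (hFint ▸ interior_maximal hOF (hOopen.sdiff isClosed_closure)) ⟨hz, hzT⟩
  refine ⟨isOpen_diff_iUnion_closure hOopen,
    sdiff_subset_sdiff_right (iUnion_mono fun _ => subset_closure),
    diff_iUnion_subset_diff_iUnion_closure_union_frontier, (interior_diff_iUnion hOopen).symm,
    fun w w' hne => hdisj fun h => hne (h ▸ rfl), ?_⟩
  exact (closure_minimal hOT isClosed_closure).antisymm <| closure_mono <|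
    iUnion_subset fun w => (image_mono sdiff_subset).trans (wordMap.image_subset hSO w)

/-- the self-similar tiling of a feasible open set O. With
G := O ∖ ⋃ᵢ cl(Sᵢ O) and Γ := O ∖ ⋃ᵢ Sᵢ(O): G is open, G ⊆ Γ ⊆ G ∪ ⋃ᵢ ∂(Sᵢ O),
G = int(Γ), distinct tiles S_w(G) are disjoint, and cl(O) = cl(⋃ tiles). -/
theorem self_similar_tiling {n N : ℕ} (hN : 0 < N)
    (S : Fin N → EuclideanSpace ℝ (Fin n) → EuclideanSpace ℝ (Fin n))
    (r : Fin N → ℝ) (hr : ∀ i, r i ∈ Set.Ioo (0 : ℝ) 1)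
    (hsim : ∀ i x y, dist (S i x) (S i y) = r i * dist x y)
    (F : Set (EuclideanSpace ℝ (Fin n))) (hFcomp : IsCompact F) (hFne : F.Nonempty)
    (hFinv : F = ⋃ i, S i '' F) (hdimH : dimH F < n)
    (O : Set (EuclideanSpace ℝ (Fin n))) (hOopen : IsOpen O) (hOne : O.Nonempty)
    (hObdd : Bornology.IsBounded O)
    (hOSC₁ : (⋃ i, S i '' O) ⊆ O)
    (hOSC₂ : ∀ i j, i ≠ j → Disjoint (S i '' O) (S j '' O)) :
    IsOpen (O \ ⋃ i, closure (S i '' O)) ∧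
    (O \ ⋃ i, closure (S i '' O)) ⊆ (O \ ⋃ i, S i '' O) ∧
    (O \ ⋃ i, S i '' O) ⊆ (O \ ⋃ i, closure (S i '' O)) ∪ ⋃ i, frontier (S i '' O) ∧
    (O \ ⋃ i, closure (S i '' O)) = interior (O \ ⋃ i, S i '' O) ∧
    (∀ w w' : List (Fin N),
      wordMap S w '' (O \ ⋃ i, closure (S i '' O)) ≠
        wordMap S w' '' (O \ ⋃ i, closure (S i '' O)) →
      Disjoint (wordMap S w '' (O \ ⋃ i, closure (S i '' O)))
        (wordMap S w' '' (O \ ⋃ i, closure (S i '' O)))) ∧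
    closure O = closure (⋃ w : List (Fin N),
      wordMap S w '' (O \ ⋃ i, closure (S i '' O))) :=
  self_similar_tiling_general S r hr hsim F hFcomp hFne hFinv hdimH O hOopen hObdd hOSC₁ hOSC₂
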